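/- The set of totally positive upper triangular unipotent n×n real matrices is closed under matrix multiplication (forms a semigroup). -/
import Mathlib

open Matrix Finset Equiv

namespace TPaux

variable {k n : ℕ}

instance : DecidablePred (StrictMono : (Fin k → Fin n) → Prop) :=
  fun f => inferInstanceAs (Decidable (∀ ⦃a b : Fin k⦄, a < b → f a < f b))

lemma det_mul_expand (A : Matrix (Fin k) (Fin n) ℝ) (B : Matrix (Fin n) (Fin k) ℝ) :
    (A * B).det = ∑ f : Fin k → Fin n, (A.submatrix id f).det * ∏ i, B (f i) i := by
  calc (A * B).det
      = ∑ σ : Perm (Fin k), ((Perm.sign σ : ℤ) : ℝ) * ∏ i, ∑ j, A (σ i) j * B j i := by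
        simp only [det_apply', mul_apply]
    _ = ∑ σ : Perm (Fin k), ((Perm.sign σ : ℤ) : ℝ) *
          ∑ f : Fin k → Fin n, ∏ i, A (σ i) (f i) * B (f i) i := by
        simp only [Finset.prod_univ_sum, Fintype.piFinset_univ]
    _ = ∑ f : Fin k → Fin n, ∑ σ : Perm (Fin k),
          (((Perm.sign σ : ℤ) : ℝ) * ∏ i, A (σ i) (f i)) * ∏ i, B (f i) i := by
        rw [Finset.sum_comm]
        refine Finset.sum_congr rfl fun σ _ => ?_
        rw [Finset.mul_sum]
        refine Finset.sum_congr rfl fun f _ => ?_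
        rw [Finset.prod_mul_distrib, mul_assoc]
    _ = ∑ f : Fin k → Fin n, (A.submatrix id f).det * ∏ i, B (f i) i := by
        refine Finset.sum_congr rfl fun f _ => ?_
        rw [det_apply', Finset.sum_mul]
        refine Finset.sum_congr rfl fun σ _ => ?_
        simp [Matrix.submatrix_apply]

lemma det_submatrix_id_eq_zero {f : Fin k → Fin n} (hf : ¬ Function.Injective f)
    (A : Matrix (Fin k) (Fin n) ℝ) : (A.submatrix id f).det = 0 := by
  simp only [Function.Injective] at hf; push_neg at hf
  obtain ⟨i, j, hij, hne⟩ := hf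
  exact det_zero_of_column_eq hne (fun x => by simp [hij])

lemma phi_bijective :
    Function.Bijective (fun p : {s : Fin k → Fin n // StrictMono s} × Perm (Fin k) =>
      (⟨p.1.1 ∘ p.2, p.1.2.injective.comp p.2.injective⟩
        : {f : Fin k → Fin n // Function.Injective f})) := by
  constructor
  · rintro ⟨⟨s, hs⟩, τ⟩ ⟨⟨s', hs'⟩, τ'⟩ h
    simp only [Subtype.mk.injEq] at h
    have hr : Set.range s = Set.range s' := by
      rw [← τ.surjective.range_comp s, h, τ'.surjective.range_comp]
    haveI : WellFoundedLT (Fin k) := inferInstance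
    have hss : s = s' := (StrictMono.range_inj hs hs').mp hr
    subst hss
    have hττ : τ = τ' := Equiv.ext fun i => hs.injective (congrFun h i)
    simp [hττ]
  · rintro ⟨f, hf⟩
    set t : Finset (Fin n) := Finset.univ.image f with ht_def
    have ht : t.card = k := by
      rw [Finset.card_image_of_injective _ hf, Finset.card_univ, Fintype.card_fin]
    have hmem : ∀ i, f i ∈ t := fun i => Finset.mem_image_of_mem f (Finset.mem_univ i)
    have hrange : ∀ i, ∃ j, t.orderEmbOfFin ht j = f i := by
      intro i
      have h1 : f i ∈ Set.range (t.orderEmbOfFin ht) := by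
        rw [Finset.range_orderEmbOfFin]; exact_mod_cast hmem i
      exact h1
    choose g hg using hrange
    have hginj : Function.Injective g := fun a b hab =>
      hf (by rw [← hg a, ← hg b, hab])
    let τ : Perm (Fin k) := Equiv.ofBijective g (Finite.injective_iff_bijective.mp hginj)
    refine ⟨⟨⟨fun i => t.orderEmbOfFin ht i, (t.orderEmbOfFin ht).strictMono⟩, τ⟩, ?_⟩
    exact Subtype.ext (funext fun i => hg i)

lemma cauchyBinet (A : Matrix (Fin k) (Fin n) ℝ) (B : Matrix (Fin n) (Fin k) ℝ) :
    (A * B).det = ∑ s : {s : Fin k → Fin n // StrictMono s},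
      (A.submatrix id s.1).det * (B.submatrix s.1 id).det := by
  classical
  rw [det_mul_expand]
  have h1 : (∑ f : Fin k → Fin n, (A.submatrix id f).det * ∏ i, B (f i) i)
      = ∑ f ∈ Finset.univ.filter (fun f : Fin k → Fin n => Function.Injective f),
          (A.submatrix id f).det * ∏ i, B (f i) i := by
    refine (Finset.sum_subset (Finset.filter_subset _ _) fun f _ hf => ?_).symm
    rw [det_submatrix_id_eq_zero (by simpa using hf), zero_mul]
  rw [h1]
  rw [Finset.sum_subtype (p := fun f : Fin k → Fin n => Function.Injective f)
    (Finset.univ.filter (fun f : Fin k → Fin n => Function.Injective f))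
    (fun f => by simp) (fun f => (A.submatrix id f).det * ∏ i, B (f i) i)]
  rw [← Fintype.sum_bijective _ phi_bijective _
    (fun f => (A.submatrix id f.1).det * ∏ i, B (f.1 i) i) (fun p => rfl)]
  rw [Fintype.sum_prod_type]
  refine Finset.sum_congr rfl fun s _ => ?_
  have hA : ∀ τ : Perm (Fin k), (A.submatrix id (s.1 ∘ τ)).det
      = ((Perm.sign τ : ℤ) : ℝ) * (A.submatrix id s.1).det := by
    intro τ
    have : A.submatrix id (s.1 ∘ τ) = (A.submatrix id s.1).submatrix id τ := by
      simp [Matrix.submatrix_submatrix]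
    rw [this, det_permute']
  calc (∑ τ : Perm (Fin k), (A.submatrix id (s.1 ∘ τ)).det * ∏ i, B ((s.1 ∘ τ) i) i)
      = (A.submatrix id s.1).det * ∑ τ : Perm (Fin k),
          ((Perm.sign τ : ℤ) : ℝ) * ∏ i, B (s.1 (τ i)) i := by
        rw [Finset.mul_sum]
        refine Finset.sum_congr rfl fun τ _ => ?_
        rw [hA τ]; simp [Function.comp]; ring
    _ = (A.submatrix id s.1).det * (B.submatrix s.1 id).det := by
        congr 1
        rw [det_apply']
        refine Finset.sum_congr rfl fun τ _ => ?_
        simp [Matrix.submatrix_apply]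

lemma det_ut_minor_zero {M : Matrix (Fin n) (Fin n) ℝ}
    (hM : ∀ i j : Fin n, j < i → M i j = 0)
    {r s : Fin k → Fin n} (hr : StrictMono r) (hs : StrictMono s)
    {l : Fin k} (hl : s l < r l) : (M.submatrix r s).det = 0 := by
  rw [det_apply']
  apply Finset.sum_eq_zero
  intro σ _
  by_cases h : ∃ j ≤ l, l ≤ σ j
  · obtain ⟨j, hj, hσj⟩ := h
    have hz : (M.submatrix r s) (σ j) j = 0 := by
      apply hM
      exact lt_of_le_of_lt (hs.monotone hj) (lt_of_lt_of_le hl (hr.monotone hσj))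
    have hp := Finset.prod_eq_zero (f := fun i => (M.submatrix r s) (σ i) i)
      (Finset.mem_univ j) hz
    rw [hp, mul_zero]
  · exfalso
    push_neg at h
    have hc : (Finset.Iic l).card ≤ (Finset.Iio l).card := by
      apply Finset.card_le_card_of_injOn σ
      · intro j hj
        exact Finset.mem_Iio.mpr (h j (Finset.mem_Iic.mp hj))
      · exact σ.injective.injOn
    rw [Fin.card_Iic, Fin.card_Iio] at hc
    omega

lemma mul_unipotent {M N : Matrix (Fin n) (Fin n) ℝ}
    (hMu : (∀ i j : Fin n, j < i → M i j = 0) ∧ ∀ i : Fin n, M i i = 1)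
    (hNu : (∀ i j : Fin n, j < i → N i j = 0) ∧ ∀ i : Fin n, N i i = 1) :
    (∀ i j : Fin n, j < i → (M * N) i j = 0) ∧ ∀ i : Fin n, (M * N) i i = 1 := by
  constructor
  · intro i j hji
    rw [mul_apply]
    apply Finset.sum_eq_zero
    intro x _
    rcases lt_or_ge x i with hx | hx
    · rw [hMu.1 i x hx, zero_mul]
    · rw [hNu.1 x j (lt_of_lt_of_le hji hx), mul_zero]
  · intro i
    rw [mul_apply, Finset.sum_eq_single i]
    · rw [hMu.2, hNu.2, one_mul]
    · intro x _ hxi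
      rcases lt_or_gt_of_ne hxi with h | h
      · rw [hMu.1 i x h, zero_mul]
      · rw [hNu.1 x i h, mul_zero]
    · intro h; exact absurd (Finset.mem_univ i) h

end TPaux

/-- An `n × n` real matrix is *upper-triangular totally positive* if every minor
with row indices `i₁ < ... < i_k` and column indices `j₁ < ... < j_k` satisfying
`i_l ≤ j_l` for all `l` is strictly positive. -/
def IsTotallyPositiveUT {n : ℕ} (M : Matrix (Fin n) (Fin n) ℝ) : Prop :=
  ∀ (k : ℕ) (r c : Fin k → Fin n), StrictMono r → StrictMono c →
    (∀ l, r l ≤ c l) → 0 < (M.submatrix r c).det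

/-- An upper triangular matrix with unit diagonal. -/
def IsUTUnipotent {n : ℕ} (M : Matrix (Fin n) (Fin n) ℝ) : Prop :=
  (∀ i j : Fin n, j < i → M i j = 0) ∧ ∀ i : Fin n, M i i = 1

/-- The totally positive upper triangular unipotent matrices form a semigroup. -/
theorem totallyPositive_mul {n : ℕ} (M N : Matrix (Fin n) (Fin n) ℝ)
    (hMu : IsUTUnipotent M) (hMp : IsTotallyPositiveUT M)
    (hNu : IsUTUnipotent N) (hNp : IsTotallyPositiveUT N) :
    IsUTUnipotent (M * N) ∧ IsTotallyPositiveUT (M * N) := by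
  refine ⟨TPaux.mul_unipotent hMu hNu, ?_⟩
  intro k r c hr hc hrc
  have hsub : (M * N).submatrix r c = (M.submatrix r id) * (N.submatrix id c) := by
    ext i j
    simp [Matrix.mul_apply]
  rw [hsub, TPaux.cauchyBinet]
  apply Finset.sum_pos'
  · intro s _
    have e1 : (M.submatrix r id).submatrix id s.1 = M.submatrix r s.1 := by
      simp [Matrix.submatrix_submatrix]
    have e2 : (N.submatrix id c).submatrix s.1 id = N.submatrix s.1 c := by
      simp [Matrix.submatrix_submatrix]
    rw [e1, e2]
    by_cases h1 : ∀ l, r l ≤ s.1 l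
    · by_cases h2 : ∀ l, s.1 l ≤ c l
      · exact le_of_lt (mul_pos (hMp k r s.1 hr s.2 h1) (hNp k s.1 c s.2 hc h2))
      · push_neg at h2
        obtain ⟨l, hl⟩ := h2
        rw [TPaux.det_ut_minor_zero hNu.1 s.2 hc hl, mul_zero]
    · push_neg at h1
      obtain ⟨l, hl⟩ := h1
      rw [TPaux.det_ut_minor_zero hMu.1 hr s.2 hl, zero_mul]
  · refine ⟨⟨r, hr⟩, Finset.mem_univ _, ?_⟩
    have e1 : (M.submatrix r id).submatrix id r = M.submatrix r r := by
      simp [Matrix.submatrix_submatrix]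
    have e2 : (N.submatrix id c).submatrix r id = N.submatrix r c := by
      simp [Matrix.submatrix_submatrix]
    rw [e1, e2]
    exact mul_pos (hMp k r r hr hr (fun l => le_refl _)) (hNp k r c hr hc hrc)
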